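/- arXiv:2308.11373 — 3 statements merged into one kernel-verified Lean document; each statement's English description precedes it below -/
import Mathlib

section
/- Correctness of the R-poset product (Theorem 1, language-level form): let P1 = (Ω_1, ⪯_1, ≠_1) and P2 = (Ω_2, ⪯_2, ≠_2) be R-posets and let P = (Ω, ⪯, ≠) be an R-poset together with an injection M : Ω_2 → Ω and an injection M_1 : Ω_1 → Ω such that (a) M_1(ω) ⊨ ω for all ω ∈ Ω_1 and M(ω) ⊨ ω for all ω ∈ Ω_2; (b) ⪯ contains the image of ⪯_1 under M_1 and of ⪯_2 under M; (c) ≠ contains the image of ≠_1 under M_1 and of ≠_2 under M. Then L(P) ⊆ L(P1) ∩ L(P2). -/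
variable {AP : Type*}

/-- A finite word over the alphabet `2^AP` is a list of subsets of `AP`. -/
abbrev Word (AP : Type*) := List (Set AP)

/-- A subtask `ω = (σ_ω, σ^s_ω)`: action labels and self-loop labels. -/
abbrev Subtask (AP : Type*) := Set AP × Set AP

/-- Subtask `ω` is executed at position `j` of word `w`. -/
def ExecAt (w : Word AP) (ω : Subtask AP) (j : ℕ) : Prop :=
  j < w.length ∧ ω.1 ⊆ w.getD j ∅ ∧ ∀ m < j, ω.2 ∩ w.getD m ∅ = ∅

/-- An R-poset `P = (Ω, ⪯, ≠)`. -/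
structure RPoset (AP : Type*) where
  tasks : Set (Subtask AP)
  ord : Set (Subtask AP × Subtask AP)
  neq : Set (Set (Subtask AP))

/-- `π` is a witness assignment of positions showing that `w` satisfies `P`. -/
def IsWitness (w : Word AP) (P : RPoset AP) (π : Subtask AP → ℕ) : Prop :=
  (∀ ω ∈ P.tasks, ExecAt w ω (π ω)) ∧
  (∀ p ∈ P.ord, π p.1 ≤ π p.2) ∧
  (∀ S ∈ P.neq, ¬ ∃ j, ∀ ω ∈ S, π ω = j)

/-- `w ⊨ P`. -/
def Sat (w : Word AP) (P : RPoset AP) : Prop := ∃ π, IsWitness w P π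

/-- The language of an R-poset. -/
def Lang (P : RPoset AP) : Set (Word AP) := {w | Sat w P}

/-- Subtask satisfaction `ω' ⊨ ω`. -/
def SatTask (ω' ω : Subtask AP) : Prop := ω.1 ⊆ ω'.1 ∧ ω.2 ⊆ ω'.2

theorem ExecAt.of_satTask {w : Word AP} {ω' ω : Subtask AP} {j : ℕ}
    (hsat : SatTask ω' ω) (h : ExecAt w ω' j) : ExecAt w ω j := by
  obtain ⟨hlen, hlabels, hloops⟩ := h
  refine ⟨hlen, hsat.1.trans hlabels, fun m hm => ?_⟩
  exact Set.subset_eq_empty (Set.inter_subset_inter_left _ hsat.2) (hloops m hm)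

theorem IsWitness.comp {w : Word AP} {P Q : RPoset AP} {π : Subtask AP → ℕ}
    {f : Subtask AP → Subtask AP} (hπ : IsWitness w P π)
    (hmem : ∀ ω ∈ Q.tasks, f ω ∈ P.tasks) (hsat : ∀ ω ∈ Q.tasks, SatTask (f ω) ω)
    (hord : ∀ p ∈ Q.ord, (f p.1, f p.2) ∈ P.ord) (hneq : ∀ S ∈ Q.neq, f '' S ∈ P.neq) :
    IsWitness w Q (π ∘ f) := by
  obtain ⟨hexec, hπord, hπneq⟩ := hπ
  refine ⟨fun ω hω => (hexec _ (hmem ω hω)).of_satTask (hsat ω hω),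
    fun p hp => hπord _ (hord p hp), fun S hS ⟨j, hj⟩ => hπneq _ (hneq S hS) ⟨j, ?_⟩⟩
  rintro _ ⟨ω, hω, rfl⟩
  exact hj ω hω

theorem lang_subset_of_map {P Q : RPoset AP} {f : Subtask AP → Subtask AP}
    (hmem : ∀ ω ∈ Q.tasks, f ω ∈ P.tasks) (hsat : ∀ ω ∈ Q.tasks, SatTask (f ω) ω)
    (hord : ∀ p ∈ Q.ord, (f p.1, f p.2) ∈ P.ord) (hneq : ∀ S ∈ Q.neq, f '' S ∈ P.neq) :
    Lang P ⊆ Lang Q :=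
  fun _ ⟨π, hπ⟩ => ⟨π ∘ f, hπ.comp hmem hsat hord hneq⟩

theorem stmt5_general (P1 P2 P : RPoset AP)
    (M1 M : Subtask AP → Subtask AP)
    (hM1mem : ∀ ω ∈ P1.tasks, M1 ω ∈ P.tasks)
    (hMmem : ∀ ω ∈ P2.tasks, M ω ∈ P.tasks)
    (hM1sat : ∀ ω ∈ P1.tasks, SatTask (M1 ω) ω)
    (hMsat : ∀ ω ∈ P2.tasks, SatTask (M ω) ω)
    (hord1 : ∀ p ∈ P1.ord, (M1 p.1, M1 p.2) ∈ P.ord)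
    (hord2 : ∀ p ∈ P2.ord, (M p.1, M p.2) ∈ P.ord)
    (hneq1 : ∀ S ∈ P1.neq, M1 '' S ∈ P.neq)
    (hneq2 : ∀ S ∈ P2.neq, M '' S ∈ P.neq) :
    Lang P ⊆ Lang P1 ∩ Lang P2 :=
  Set.subset_inter (lang_subset_of_map hM1mem hM1sat hord1 hneq1)
    (lang_subset_of_map hMmem hMsat hord2 hneq2)

/-- Theorem 1, correctness of the R-poset product: if the product
R-poset `P` contains, via injections `M1` and `M`, satisfying images of all
subtasks of `P1`, `P2`, of their ordering relations and of their not-equal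
constraints, then `L(P) ⊆ L(P1) ∩ L(P2)`. -/
theorem stmt5 (P1 P2 P : RPoset AP)
    (M1 M : Subtask AP → Subtask AP)
    (hM1inj : Set.InjOn M1 P1.tasks) (hMinj : Set.InjOn M P2.tasks)
    (hM1mem : ∀ ω ∈ P1.tasks, M1 ω ∈ P.tasks)
    (hMmem : ∀ ω ∈ P2.tasks, M ω ∈ P.tasks)
    (hM1sat : ∀ ω ∈ P1.tasks, SatTask (M1 ω) ω)
    (hMsat : ∀ ω ∈ P2.tasks, SatTask (M ω) ω)
    (hord1 : ∀ p ∈ P1.ord, (M1 p.1, M1 p.2) ∈ P.ord)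
    (hord2 : ∀ p ∈ P2.ord, (M p.1, M p.2) ∈ P.ord)
    (hneq1 : ∀ S ∈ P1.neq, M1 '' S ∈ P.neq)
    (hneq2 : ∀ S ∈ P2.neq, M '' S ∈ P.neq) :
    Lang P ⊆ Lang P1 ∩ Lang P2 :=
  stmt5_general P1 P2 P M1 M hM1mem hMmem hM1sat hMsat hord1 hord2 hneq1 hneq2
end

section
/- The trivial disjoint product of two R-posets with disjoint subtask sets and the union of their constraints has language exactly the intersection of their languages, provided no self-loop label of one conflicts with any action label of the other: if P1 = (Ω_1, ⪯_1, ≠_1) and P2 = (Ω_2, ⪯_2, ≠_2) with Ω_1 ∩ Ω_2 = ∅, and P = (Ω_1 ∪ Ω_2, ⪯_1 ∪ ⪯_2, ≠_1 ∪ ≠_2), then L(P) = L(P1) ∩ L(P2). -/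
variable {AP : Type*}

/-!
A witness for the product is a witness for each factor. Conversely, the constraints of each
factor only mention its own subtasks, so a witness may be changed freely off them; as the subtask
sets are disjoint, the witnesses of the two factors glue along `Ω₁` into one for the product.
-/

namespace RPoset

def union (P₁ P₂ : RPoset AP) : RPoset AP :=
  ⟨P₁.tasks ∪ P₂.tasks, P₁.ord ∪ P₂.ord, P₁.neq ∪ P₂.neq⟩

def ConstraintsOnTasks (P : RPoset AP) : Prop :=
  (∀ p ∈ P.ord, p.1 ∈ P.tasks ∧ p.2 ∈ P.tasks) ∧ ∀ S ∈ P.neq, S ⊆ P.tasks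

end RPoset

theorem isWitness_union {w : Word AP} {P₁ P₂ : RPoset AP} {π : Subtask AP → ℕ} :
    IsWitness w (P₁.union P₂) π ↔ IsWitness w P₁ π ∧ IsWitness w P₂ π := by
  simp only [IsWitness, RPoset.union, Set.mem_union, or_imp, forall_and]
  tauto

theorem IsWitness.congr {w : Word AP} {P : RPoset AP} {π π' : Subtask AP → ℕ}
    (hP : P.ConstraintsOnTasks) (h : Set.EqOn π π' P.tasks) (hπ : IsWitness w P π) :
    IsWitness w P π' := by
  obtain ⟨hexec, hord, hneq⟩ := hπ
  refine ⟨fun ω hω => h hω ▸ hexec ω hω, fun p hp => ?_, fun S hS ⟨j, hj⟩ => ?_⟩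
  · obtain ⟨h₁, h₂⟩ := hP.1 p hp
    simpa only [h h₁, h h₂] using hord p hp
  · exact hneq S hS ⟨j, fun ω hω => (h (hP.2 S hS hω)).trans (hj ω hω)⟩

theorem lang_union {P₁ P₂ : RPoset AP} (hdisj : Disjoint P₁.tasks P₂.tasks)
    (hP₁ : P₁.ConstraintsOnTasks) (hP₂ : P₂.ConstraintsOnTasks) :
    Lang (P₁.union P₂) = Lang P₁ ∩ Lang P₂ := by
  classical
  ext w
  refine ⟨fun ⟨π, hπ⟩ => ⟨⟨π, (isWitness_union.1 hπ).1⟩, ⟨π, (isWitness_union.1 hπ).2⟩⟩, ?_⟩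
  rintro ⟨⟨π₁, hπ₁⟩, ⟨π₂, hπ₂⟩⟩
  refine ⟨P₁.tasks.piecewise π₁ π₂, isWitness_union.2 ⟨?_, ?_⟩⟩
  · exact hπ₁.congr hP₁ (Set.piecewise_eqOn _ _ _).symm
  · exact hπ₂.congr hP₂
      ((Set.piecewise_eqOn_compl _ _ _).mono (Set.subset_compl_iff_disjoint_left.2 hdisj)).symm

theorem stmt6_general (P1 P2 Q : RPoset AP)
    (hdisj : P1.tasks ∩ P2.tasks = ∅)
    (hord1 : ∀ p ∈ P1.ord, p.1 ∈ P1.tasks ∧ p.2 ∈ P1.tasks)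
    (hord2 : ∀ p ∈ P2.ord, p.1 ∈ P2.tasks ∧ p.2 ∈ P2.tasks)
    (hneq1 : ∀ S ∈ P1.neq, S ⊆ P1.tasks)
    (hneq2 : ∀ S ∈ P2.neq, S ⊆ P2.tasks)
    (hQ : Q = ⟨P1.tasks ∪ P2.tasks, P1.ord ∪ P2.ord, P1.neq ∪ P2.neq⟩) :
    Lang Q = Lang P1 ∩ Lang P2 := by
  subst hQ
  exact lang_union (Set.disjoint_iff_inter_eq_empty.2 hdisj) ⟨hord1, hneq1⟩ ⟨hord2, hneq2⟩

/-- the trivial disjoint product of two R-posets with disjoint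
subtask sets, provided no self-loop label of one conflicts with any action label
of the other, has language exactly the intersection of the two languages. -/
theorem stmt6 (P1 P2 Q : RPoset AP)
    (hdisj : P1.tasks ∩ P2.tasks = ∅)
    (hord1 : ∀ p ∈ P1.ord, p.1 ∈ P1.tasks ∧ p.2 ∈ P1.tasks)
    (hord2 : ∀ p ∈ P2.ord, p.1 ∈ P2.tasks ∧ p.2 ∈ P2.tasks)
    (hneq1 : ∀ S ∈ P1.neq, S ⊆ P1.tasks)
    (hneq2 : ∀ S ∈ P2.neq, S ⊆ P2.tasks)
    (hnoconf : ∀ ω1 ∈ P1.tasks, ∀ ω2 ∈ P2.tasks,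
      ω1.2 ∩ ω2.1 = ∅ ∧ ω2.2 ∩ ω1.1 = ∅)
    (hQ : Q = ⟨P1.tasks ∪ P2.tasks, P1.ord ∪ P2.ord, P1.neq ∪ P2.neq⟩) :
    Lang Q = Lang P1 ∩ Lang P2 :=
  stmt6_general P1 P2 Q hdisj hord1 hord2 hneq1 hneq2 hQ
end

section
/- Online product finished-subtask soundness: let P1 = (Ω_1, ⪯_1, ≠_1) and let w_0 be a finite word with a partial witness assignment π₀ covering a subset Ω_f ⊆ Ω_1 of 'finished' subtasks (each ω ∈ Ω_f is executed at position π₀(ω) in w_0 and all ⪯_1-predecessors of Ω_f elements are in Ω_f). If w is a finite word such that the concatenation w_0·w satisfies the restricted R-poset P1' = (Ω_1 \ Ω_f, ⪯_1 restricted, ≠_1 restricted) using only positions beyond |w_0| for the unfinished subtasks, and additionally for every ω ∈ Ω_1 \ Ω_f the self-loop labels σ^s_ω do not appear in w_0, then w_0·w satisfies P1. -/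
variable {AP : Type*}

/-! The witness for `P1` takes `π₀` on the finished subtasks and the restricted witness `π` on the
others. Finished subtasks sit at positions `< |w₀|` and unfinished ones at positions `≥ |w₀|`, so an
order constraint from a finished to an unfinished subtask holds automatically, the reverse one is
excluded by downward closure, and a `≠`-set mixing both kinds never shares a position. Executions in
`w₀` stay executions in `w₀ · w` because they only inspect letters of `w₀`. -/

theorem ExecAt.append_right {w0 : Word AP} {ω : Subtask AP} {j : ℕ} (h : ExecAt w0 ω j)
    (w : Word AP) : ExecAt (w0 ++ w) ω j := by
  obtain ⟨hj, hact, hself⟩ := h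
  refine ⟨by rw [List.length_append]; omega, by rwa [List.getD_append _ _ _ _ hj], fun m hm => ?_⟩
  rw [List.getD_append _ _ _ _ (hm.trans hj)]
  exact hself m hm

section Piecewise

variable {α β : Type*} [Preorder β] {s T : Set α} {f g : α → β} [∀ a, Decidable (a ∈ s)]

theorem Set.piecewise_le_piecewise_of_lt (hsep : ∀ a ∈ s, ∀ b ∈ T \ s, f a < g b) {a b : α}
    (ha : a ∈ T) (hb : b ∈ T) (hdown : b ∈ s → a ∈ s) (hf : a ∈ s → b ∈ s → f a ≤ f b)
    (hg : a ∈ T \ s → b ∈ T \ s → g a ≤ g b) : s.piecewise f g a ≤ s.piecewise f g b := by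
  by_cases hbs : b ∈ s
  · have has := hdown hbs
    simpa only [Set.piecewise_eq_of_mem _ _ _ has, Set.piecewise_eq_of_mem _ _ _ hbs] using
      hf has hbs
  · rw [Set.piecewise_eq_of_notMem _ _ _ hbs]
    by_cases has : a ∈ s
    · rw [Set.piecewise_eq_of_mem _ _ _ has]
      exact (hsep a has b ⟨hb, hbs⟩).le
    · rw [Set.piecewise_eq_of_notMem _ _ _ has]
      exact hg ⟨ha, has⟩ ⟨hb, hbs⟩

theorem Set.piecewise_const_on_of_lt (hsep : ∀ a ∈ s, ∀ b ∈ T \ s, f a < g b) {S : Set α}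
    (hST : S ⊆ T) {j : β} (h : ∀ x ∈ S, s.piecewise f g x = j) :
    (S ⊆ s ∧ ∀ x ∈ S, f x = j) ∨ (S ⊆ T \ s ∧ ∀ x ∈ S, g x = j) := by
  by_cases hSs : S ⊆ s
  · exact .inl ⟨hSs, fun x hx => by rw [← h x hx, Set.piecewise_eq_of_mem _ _ _ (hSs hx)]⟩
  obtain ⟨b, hbS, hbs⟩ := Set.not_subset.mp hSs
  have hgb : g b = j := by rw [← h b hbS, Set.piecewise_eq_of_notMem _ _ _ hbs]
  have hxs : ∀ x ∈ S, x ∉ s := fun x hx hxs => by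
    have hfx : f x = j := by rw [← h x hx, Set.piecewise_eq_of_mem _ _ _ hxs]
    exact (hsep x hxs b ⟨hST hbS, hbs⟩).ne (hfx.trans hgb.symm)
  exact .inr ⟨fun x hx => ⟨hST hx, hxs x hx⟩,
    fun x hx => by rw [← h x hx, Set.piecewise_eq_of_notMem _ _ _ (hxs x hx)]⟩

end Piecewise

theorem stmt14_general (P1 : RPoset AP) (Ωf : Set (Subtask AP)) (w0 w : Word AP)
    (π0 : Subtask AP → ℕ)
    (hordmem : ∀ p ∈ P1.ord, p.1 ∈ P1.tasks ∧ p.2 ∈ P1.tasks)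
    (hneqmem : ∀ S ∈ P1.neq, S ⊆ P1.tasks)
    -- π₀ is a partial witness on the finished subtasks over w₀:
    (h0exec : ∀ ω ∈ Ωf, ExecAt w0 ω (π0 ω))
    (h0ord : ∀ p ∈ P1.ord, p.1 ∈ Ωf → p.2 ∈ Ωf → π0 p.1 ≤ π0 p.2)
    (h0neq : ∀ S ∈ P1.neq, S ⊆ Ωf → ¬ ∃ j, ∀ ω ∈ S, π0 ω = j)
    -- all ⪯₁-predecessors of finished subtasks are finished:
    (hdown : ∀ p ∈ P1.ord, p.2 ∈ Ωf → p.1 ∈ Ωf)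
    -- w₀·w satisfies the restricted R-poset with positions beyond |w₀|:
    (hrest : ∃ π : Subtask AP → ℕ,
      (∀ ω ∈ P1.tasks \ Ωf, w0.length ≤ π ω ∧ ExecAt (w0 ++ w) ω (π ω)) ∧
      (∀ p ∈ P1.ord, p.1 ∈ P1.tasks \ Ωf → p.2 ∈ P1.tasks \ Ωf →
        π p.1 ≤ π p.2) ∧
      (∀ S ∈ P1.neq, S ⊆ P1.tasks \ Ωf → ¬ ∃ j, ∀ ω ∈ S, π ω = j)) :
    Sat (w0 ++ w) P1 := by
  classical
  obtain ⟨π, hπexec, hπord, hπneq⟩ := hrest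
  have hsep : ∀ a ∈ Ωf, ∀ b ∈ P1.tasks \ Ωf, π0 a < π b := fun a ha b hb =>
    (h0exec a ha).1.trans_le (hπexec b hb).1
  refine ⟨Ωf.piecewise π0 π, fun ω hω => ?_, fun p hp => ?_, fun S hS ⟨j, hj⟩ => ?_⟩
  · by_cases hf : ω ∈ Ωf
    · rw [Set.piecewise_eq_of_mem _ _ _ hf]
      exact (h0exec ω hf).append_right w
    · rw [Set.piecewise_eq_of_notMem _ _ _ hf]
      exact (hπexec ω ⟨hω, hf⟩).2
  · exact Set.piecewise_le_piecewise_of_lt hsep (hordmem p hp).1 (hordmem p hp).2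
      (hdown p hp) (h0ord p hp) (hπord p hp)
  · rcases Set.piecewise_const_on_of_lt hsep (hneqmem S hS) hj with ⟨hSf, h0j⟩ | ⟨hSu, hπj⟩
    · exact h0neq S hS hSf ⟨j, h0j⟩
    · exact hπneq S hS hSu ⟨j, hπj⟩

/-- online product finished-subtask soundness: if `π₀` is a
partial witness on the finished, downward-closed set `Ω_f ⊆ Ω_1` over `w_0`,
and `w_0·w` satisfies the restriction of `P1` to the unfinished subtasks using
only positions beyond `|w_0|`, while no unfinished self-loop label occurs in
`w_0`, then `w_0·w` satisfies `P1`. -/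
theorem stmt14 (P1 : RPoset AP) (Ωf : Set (Subtask AP)) (w0 w : Word AP)
    (π0 : Subtask AP → ℕ)
    (hfsub : Ωf ⊆ P1.tasks)
    (hordmem : ∀ p ∈ P1.ord, p.1 ∈ P1.tasks ∧ p.2 ∈ P1.tasks)
    (hneqmem : ∀ S ∈ P1.neq, S ⊆ P1.tasks)
    -- π₀ is a partial witness on the finished subtasks over w₀:
    (h0exec : ∀ ω ∈ Ωf, ExecAt w0 ω (π0 ω))
    (h0ord : ∀ p ∈ P1.ord, p.1 ∈ Ωf → p.2 ∈ Ωf → π0 p.1 ≤ π0 p.2)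
    (h0neq : ∀ S ∈ P1.neq, S ⊆ Ωf → ¬ ∃ j, ∀ ω ∈ S, π0 ω = j)
    -- all ⪯₁-predecessors of finished subtasks are finished:
    (hdown : ∀ p ∈ P1.ord, p.2 ∈ Ωf → p.1 ∈ Ωf)
    -- w₀·w satisfies the restricted R-poset with positions beyond |w₀|:
    (hrest : ∃ π : Subtask AP → ℕ,
      (∀ ω ∈ P1.tasks \ Ωf, w0.length ≤ π ω ∧ ExecAt (w0 ++ w) ω (π ω)) ∧
      (∀ p ∈ P1.ord, p.1 ∈ P1.tasks \ Ωf → p.2 ∈ P1.tasks \ Ωf →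
        π p.1 ≤ π p.2) ∧
      (∀ S ∈ P1.neq, S ⊆ P1.tasks \ Ωf → ¬ ∃ j, ∀ ω ∈ S, π ω = j))
    -- self-loop labels of unfinished subtasks do not appear in w₀:
    (hself : ∀ ω ∈ P1.tasks \ Ωf, ∀ m < w0.length, ω.2 ∩ w0.getD m ∅ = ∅) :
    Sat (w0 ++ w) P1 :=
  stmt14_general P1 Ωf w0 w π0 hordmem hneqmem h0exec h0ord h0neq hdown hrest
end
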